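/- Let G¹=(V¹,E¹) and G²=(V²,E²) be finite simple graphs. If RD(G¹,G²) = 0 (computed on the common vertex set V¹ ∪ V², with missing vertices adjoined as isolated vertices), then E¹ = E², and every vertex of V¹ \ V² is isolated in G¹ and every vertex of V² \ V¹ is isolated in G²; in particular the two graphs differ only by a set of isolated vertices. -/

import Mathlib

open scoped Classical BigOperators ENNReal
open Filter MeasureTheory Topology Asymptotics ProbabilityTheory

noncomputable section

namespace RP

variable {V : Type*} [Fintype V]

/-- A unit flow from `u` to `v` on the graph `G`. -/
def IsUnitFlow (G : SimpleGraph V) (u v : V) (f : V → V → ℝ) : Prop :=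
  (∀ a b, f a b = - f b a) ∧
  (∀ a b, ¬ G.Adj a b → f a b = 0) ∧
  (∀ w, ∑ x, f w x = (if w = u then (1:ℝ) else 0) - (if w = v then (1:ℝ) else 0))

/-- Energy of a flow (each undirected edge counted once). -/
def energy (f : V → V → ℝ) : ℝ := (1/2) * ∑ a, ∑ b, (f a b)^2

/-- Effective resistance as infimum of energies of unit flows, `∞` if disconnected. -/
def effRes (G : SimpleGraph V) (u v : V) : ℝ≥0∞ :=
  sInf {x : ℝ≥0∞ | ∃ f, IsUnitFlow G u v f ∧ x = ENNReal.ofReal (energy f)}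

/-- Renormalized effective resistance `R̂/(R̂+1)`, equal to 1 when disconnected. -/
def renRes (G : SimpleGraph V) (u v : V) : ℝ :=
  if effRes G u v = ⊤ then 1
  else (effRes G u v).toReal / ((effRes G u v).toReal + 1)

/-- Renormalized resistance distance, summed over pairs `u < v` in `S`. -/
def RDon [LinearOrder V] (S : Finset V) (G₁ G₂ : SimpleGraph V) : ℝ :=
  ∑ p ∈ (S ×ˢ S).filter (fun p => p.1 < p.2),
    |renRes G₁ p.1 p.2 - renRes G₂ p.1 p.2|

/-- Renormalized resistance distance on a full common vertex set. -/
def RD [LinearOrder V] (G₁ G₂ : SimpleGraph V) : ℝ := RDon Finset.univ G₁ G₂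

/-!
When `u` and `v` are connected, `e_u - e_v` lies in the range of the Laplacian `L`, and for any
potential `L φ = e_u - e_v` Thomson's principle gives `R̂_uv = φ u - φ v = ⟪φ, L φ⟫`, the
infimum being attained by the potential flow of `φ`. Polarising `⟪φ, L φ⟫` gives
`2 (φ c - φ d) = R̂_ad + R̂_bc - R̂_ac - R̂_bd` for `L φ = e_a - e_b` and `c` connected to `b`,
while `φ c = φ d` for `c`, `d` in another component. So two graphs with the same resistances
share the potentials of all `e_a - e_b`; these vectors span the common range of the Laplacians,
whose kernels agree, hence the Laplacians and the graphs agree.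
`RD = 0` gives equal resistances between vertices of `V₁ ∪ V₂`, and all other vertices are
isolated in both graphs.
-/

open Finset Submodule RealInnerProductSpace

theorem _root_.LinearMap.eq_of_ker_le_of_range_le_span {R M N : Type*} [Ring R] [AddCommGroup M]
    [Module R M] [AddCommGroup N] [Module R N] {T₁ T₂ : M →ₗ[R] N} {S : Set N}
    (hker : LinearMap.ker T₁ ≤ LinearMap.ker T₂) (hrange : LinearMap.range T₁ ≤ span R S)
    (hS : ∀ s ∈ S, ∃ x, T₁ x = s ∧ T₂ x = s) : T₁ = T₂ := by
  have hspan : span R S ≤ (LinearMap.eqLocus T₁ T₂).map T₁ := span_le.2 fun s hs => by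
    obtain ⟨x, h₁, h₂⟩ := hS s hs
    exact ⟨x, h₁.trans h₂.symm, h₁⟩
  ext y
  obtain ⟨x, hx, hxy⟩ := hspan (hrange ⟨y, rfl⟩)
  have hyx : y - x ∈ LinearMap.ker T₂ := hker (by simp [hxy])
  rw [LinearMap.mem_ker, map_sub, sub_eq_zero] at hyx
  rw [hyx, ← hx, hxy]

theorem _root_.LinearMap.IsSymmetric.two_mul_inner_eq {E : Type*} [NormedAddCommGroup E]
    [InnerProductSpace ℝ E] {T : E →ₗ[ℝ] E} (hT : T.IsSymmetric) (x y z : E) :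
    2 * ⟪x, T z⟫ = ⟪x + y + z, T (x + y + z)⟫ + ⟪y, T y⟫ - ⟪x + y, T (x + y)⟫
      - ⟪y + z, T (y + z)⟫ := by
  simp only [map_add, inner_add_left, inner_add_right]
  rw [← hT z x, real_inner_comm (T z)]
  ring

theorem _root_.SimpleGraph.eq_of_lapMatrix_eq {R : Type*} [AddGroupWithOne R] [NeZero (1 : R)]
    [DecidableEq V] {G₁ G₂ : SimpleGraph V} [DecidableRel G₁.Adj] [DecidableRel G₂.Adj]
    (h : G₁.lapMatrix R = G₂.lapMatrix R) : G₁ = G₂ := by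
  ext a b
  by_cases hab : a = b
  · simp [hab]
  have := congr_fun₂ h a b
  simp only [SimpleGraph.lapMatrix, SimpleGraph.degMatrix, Matrix.sub_apply,
    Matrix.diagonal_apply_ne _ hab, SimpleGraph.adjMatrix_apply, zero_sub, neg_inj] at this
  split_ifs at this <;> simp_all

variable (G : SimpleGraph V)

def lap : EuclideanSpace ℝ V →ₗ[ℝ] EuclideanSpace ℝ V := Matrix.toEuclideanLin (G.lapMatrix ℝ)

def dipole (u v : V) : EuclideanSpace ℝ V := EuclideanSpace.single u 1 - EuclideanSpace.single v 1

theorem inner_dipole_right (φ : EuclideanSpace ℝ V) (u v : V) : ⟪φ, dipole u v⟫ = φ u - φ v := by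
  simp [dipole, inner_sub_right, EuclideanSpace.inner_single_right]

theorem lap_apply (φ : EuclideanSpace ℝ V) (a : V) :
    lap G φ a = ∑ b, if G.Adj a b then φ a - φ b else 0 := by
  rw [lap, Matrix.ofLp_toLpLin, Matrix.toLin'_apply, SimpleGraph.lapMatrix_mulVec_apply,
    ← sum_filter, sum_sub_distrib, sum_const, nsmul_eq_mul, ← SimpleGraph.neighborFinset_eq_filter,
    SimpleGraph.card_neighborFinset_eq_degree]

theorem isSymmetric_lap : (lap G).IsSymmetric :=
  Matrix.isSymmetric_toEuclideanLin_iff.2 (SimpleGraph.isHermitian_lapMatrix ℝ G)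

theorem mem_ker_lap {φ : EuclideanSpace ℝ V} :
    φ ∈ LinearMap.ker (lap G) ↔ ∀ a b, G.Reachable a b → φ a = φ b := by
  rw [LinearMap.mem_ker, lap, ← WithLp.ofLp_eq_zero, Matrix.ofLp_toLpLin, Matrix.toLin'_apply,
    SimpleGraph.lapMatrix_mulVec_eq_zero_iff_forall_reachable]

theorem range_lap :
    LinearMap.range (lap G) = span ℝ {dipole a b | (a) (b) (_ : G.Reachable a b)} := by
  have hperp : (span ℝ {dipole a b | (a) (b) (_ : G.Reachable a b)})ᗮ ≤ LinearMap.ker (lap G) :=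
    fun φ hφ => (mem_ker_lap G).2 fun a b h => by
      have := (mem_orthogonal' _ _).1 hφ _ (subset_span ⟨a, b, h, rfl⟩)
      rw [inner_dipole_right, sub_eq_zero] at this
      exact this
  rw [← orthogonal_orthogonal (LinearMap.range (lap G)), (isSymmetric_lap G).orthogonal_range]
  refine le_antisymm ?_ (span_le.2 ?_)
  · simpa only [orthogonal_orthogonal] using orthogonal_le hperp
  · rintro _ ⟨a, b, h, rfl⟩
    refine (mem_orthogonal _ _).2 fun φ hφ => ?_
    rw [inner_dipole_right, (mem_ker_lap G).1 hφ a b h, sub_self]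

theorem exists_lap_eq_dipole {u v : V} (h : G.Reachable u v) : ∃ φ, lap G φ = dipole u v :=
  (range_lap G).ge (subset_span ⟨u, v, h, rfl⟩)

theorem sum_sum_mul_sub_of_antisymm {f : V → V → ℝ} (hf : ∀ a b, f a b = -f b a) (ψ : V → ℝ) :
    ∑ a, ∑ b, f a b * (ψ a - ψ b) = 2 * ∑ a, ψ a * ∑ b, f a b := by
  have hswap : ∑ a, ∑ b, f a b * ψ b = -∑ a, ∑ b, f a b * ψ a := by
    rw [sum_comm, ← sum_neg_distrib]
    refine sum_congr rfl fun b _ => ?_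
    rw [← sum_neg_distrib]
    exact sum_congr rfl fun a _ => by rw [hf]; ring
  calc ∑ a, ∑ b, f a b * (ψ a - ψ b) = ∑ a, ∑ b, f a b * ψ a - ∑ a, ∑ b, f a b * ψ b := by
        simp only [mul_sub, sum_sub_distrib]
    _ = 2 * ∑ a, ∑ b, f a b * ψ a := by rw [hswap]; ring
    _ = 2 * ∑ a, ψ a * ∑ b, f a b := by simp only [mul_sum, mul_comm]

variable {G}

theorem IsUnitFlow.sum_sum_mul_sub {u v : V} {f : V → V → ℝ} (hf : IsUnitFlow G u v f)
    (ψ : V → ℝ) : ∑ a, ∑ b, f a b * (ψ a - ψ b) = 2 * (ψ u - ψ v) := by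
  rw [sum_sum_mul_sub_of_antisymm hf.1]
  simp only [hf.2.2, mul_sub, sum_sub_distrib, mul_ite, mul_one, mul_zero, sum_ite_eq', mem_univ,
    if_true]

variable (G)

def potentialFlow (φ : EuclideanSpace ℝ V) (a b : V) : ℝ := if G.Adj a b then φ a - φ b else 0

variable {G}

theorem isUnitFlow_potentialFlow {u v : V} {φ : EuclideanSpace ℝ V} (h : lap G φ = dipole u v) :
    IsUnitFlow G u v (potentialFlow G φ) := by
  refine ⟨fun a b => ?_, fun a b hab => if_neg hab, fun w => ?_⟩
  · simp only [potentialFlow, G.adj_comm b a]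
    split_ifs <;> ring
  · simpa [lap_apply, dipole, PiLp.single_apply, potentialFlow] using congr($h w)

theorem energy_potentialFlow {u v : V} {φ : EuclideanSpace ℝ V} (h : lap G φ = dipole u v) :
    energy (potentialFlow G φ) = φ u - φ v := by
  have hsq : ∀ a b, potentialFlow G φ a b ^ 2 = potentialFlow G φ a b * (φ a - φ b) := by
    intro a b
    unfold potentialFlow
    split_ifs <;> ring
  simp only [energy, hsq, (isUnitFlow_potentialFlow h).sum_sum_mul_sub]
  ring

theorem sub_le_energy {u v : V} {φ : EuclideanSpace ℝ V} {f : V → V → ℝ}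
    (h : lap G φ = dipole u v) (hf : IsUnitFlow G u v f) : φ u - φ v ≤ energy f := by
  set g := potentialFlow G φ
  have hcross : ∑ a, ∑ b, f a b * g a b = 2 * (φ u - φ v) := by
    rw [← hf.sum_sum_mul_sub φ]
    refine sum_congr rfl fun a _ => sum_congr rfl fun b _ => ?_
    by_cases hab : G.Adj a b
    · simp [g, potentialFlow, hab]
    · simp [hf.2.1 a b hab]
  have hpoint : ∀ a b, 2 * (f a b * g a b) - g a b ^ 2 ≤ f a b ^ 2 :=
    fun a b => by nlinarith [sq_nonneg (f a b - g a b)]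
  have hsum := sum_le_sum fun a (_ : a ∈ univ) => sum_le_sum fun b (_ : b ∈ univ) => hpoint a b
  have hg := energy_potentialFlow h
  simp only [sum_sub_distrib, ← mul_sum, hcross] at hsum
  simp only [energy] at hg ⊢
  linarith

theorem effRes_eq_ofReal {u v : V} {φ : EuclideanSpace ℝ V} (h : lap G φ = dipole u v) :
    effRes G u v = ENNReal.ofReal (φ u - φ v) := by
  refine le_antisymm (sInf_le ⟨_, isUnitFlow_potentialFlow h, by rw [energy_potentialFlow h]⟩)
    (le_sInf ?_)
  rintro _ ⟨f, hf, rfl⟩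
  exact ENNReal.ofReal_le_ofReal (sub_le_energy h hf)

theorem toReal_effRes {u v : V} {φ : EuclideanSpace ℝ V} (h : lap G φ = dipole u v) :
    (effRes G u v).toReal = ⟪φ, lap G φ⟫ := by
  have hnonneg : 0 ≤ φ u - φ v := by
    rw [← energy_potentialFlow h, energy]
    positivity
  rw [effRes_eq_ofReal h, ENNReal.toReal_ofReal hnonneg, h, inner_dipole_right]

theorem effRes_eq_top_of_not_reachable {u v : V} (h : ¬G.Reachable u v) : effRes G u v = ⊤ := by
  refine sInf_eq_top.2 ?_
  rintro _ ⟨f, hf, -⟩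
  let ψ : V → ℝ := fun x => if G.Reachable u x then 1 else 0
  have hcut : ∀ a b, f a b * (ψ a - ψ b) = 0 := fun a b => by
    by_cases hab : G.Adj a b
    · have : G.Reachable u a ↔ G.Reachable u b :=
        ⟨(·.trans hab.reachable), (·.trans hab.symm.reachable)⟩
      simp [ψ, this]
    · simp [hf.2.1 a b hab]
  have := hf.sum_sum_mul_sub ψ
  simp [hcut, ψ, h] at this

theorem effRes_eq_top_iff {u v : V} : effRes G u v = ⊤ ↔ ¬G.Reachable u v := by
  refine ⟨fun htop huv => ?_, effRes_eq_top_of_not_reachable⟩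
  obtain ⟨φ, hφ⟩ := exists_lap_eq_dipole G huv
  exact ENNReal.ofReal_ne_top ((effRes_eq_ofReal hφ).symm.trans htop)

theorem effRes_self (u : V) : effRes G u u = 0 := by
  simpa using effRes_eq_ofReal (φ := 0) (by simp [dipole])

theorem effRes_comm (u v : V) : effRes G u v = effRes G v u := by
  by_cases huv : G.Reachable u v
  · obtain ⟨φ, hφ⟩ := exists_lap_eq_dipole G huv
    have hφ' : lap G (-φ) = dipole v u := by rw [map_neg, hφ, dipole, dipole, neg_sub]
    rw [effRes_eq_ofReal hφ, effRes_eq_ofReal hφ']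
    congr 1
    simp only [PiLp.neg_apply]
    ring
  · rw [effRes_eq_top_of_not_reachable huv, effRes_eq_top_of_not_reachable (mt .symm huv)]

theorem effRes_eq_top_of_forall_not_adj {u v : V} (hu : ∀ w, ¬G.Adj u w)
    (huv : u ≠ v) : effRes G u v = ⊤ :=
  effRes_eq_top_iff.2 fun ⟨p⟩ => by
    cases p with
    | nil => exact huv rfl
    | cons h _ => exact hu _ h

theorem two_mul_sub_eq_effRes {a b c d : V} {φ : EuclideanSpace ℝ V} (h : lap G φ = dipole a b)
    (hbc : G.Reachable b c) (hcd : G.Reachable c d) :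
    2 * (φ c - φ d) = (effRes G a d).toReal + (effRes G b c).toReal - (effRes G a c).toReal
      - (effRes G b d).toReal := by
  obtain ⟨χ, hχ⟩ := exists_lap_eq_dipole G hbc
  obtain ⟨ψ, hψ⟩ := exists_lap_eq_dipole G hcd
  have had : lap G (φ + χ + ψ) = dipole a d := by
    rw [map_add, map_add, h, hχ, hψ, dipole, dipole, dipole, dipole]; abel
  have hac : lap G (φ + χ) = dipole a c := by
    rw [map_add, h, hχ, dipole, dipole, dipole]; abel
  have hbd : lap G (χ + ψ) = dipole b d := by
    rw [map_add, hχ, hψ, dipole, dipole, dipole]; abel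
  rw [toReal_effRes had, toReal_effRes hχ, toReal_effRes hac, toReal_effRes hbd,
    ← (isSymmetric_lap G).two_mul_inner_eq, hψ, inner_dipole_right]

/-- Zeroing `φ` on the component of `a` leaves a harmonic function, which is therefore constant
on every other component. -/
theorem apply_eq_apply_of_not_reachable {a b c d : V} {φ : EuclideanSpace ℝ V}
    (h : lap G φ = dipole a b) (hab : G.Reachable a b) (hac : ¬G.Reachable a c)
    (hcd : G.Reachable c d) : φ c = φ d := by
  set χ : EuclideanSpace ℝ V := WithLp.toLp 2 fun x => if G.Reachable a x then 0 else φ x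
  have hχ : χ ∈ LinearMap.ker (lap G) := by
    refine LinearMap.mem_ker.2 (PiLp.ext fun x => ?_)
    rw [lap_apply, PiLp.zero_apply]
    by_cases hx : G.Reachable a x
    · refine sum_eq_zero fun y _ => ?_
      split_ifs with hxy
      · simp [χ, hx, hx.trans hxy.reachable]
      · rfl
    · have hxa : x ≠ a := by rintro rfl; exact hx .rfl
      have hxb : x ≠ b := by rintro rfl; exact hx hab
      calc ∑ y, (if G.Adj x y then χ x - χ y else 0)
          = ∑ y, (if G.Adj x y then φ x - φ y else 0) := sum_congr rfl fun y _ => by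
            split_ifs with hxy
            · have hy : ¬G.Reachable a y := fun hy => hx (hy.trans hxy.symm.reachable)
              simp [χ, hx, hy]
            · rfl
        _ = 0 := by rw [← lap_apply, h]; simp [dipole, hxa, hxb]
  have had : ¬G.Reachable a d := fun had => hac (had.trans hcd.symm)
  simpa [χ, hac, had] using (mem_ker_lap G).1 hχ c d hcd

section TwoGraphs

variable {G₁ G₂ : SimpleGraph V}

theorem reachable_iff_of_effRes_eq (heff : ∀ u v, effRes G₁ u v = effRes G₂ u v) (u v : V) :
    G₁.Reachable u v ↔ G₂.Reachable u v := by
  rw [← not_iff_not, ← effRes_eq_top_iff, ← effRes_eq_top_iff, heff]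

theorem lap_eq_dipole_of_effRes_eq (heff : ∀ u v, effRes G₁ u v = effRes G₂ u v) {a b : V}
    {φ : EuclideanSpace ℝ V} (hab : G₁.Reachable a b) (h : lap G₁ φ = dipole a b) :
    lap G₂ φ = dipole a b := by
  have hreach := reachable_iff_of_effRes_eq heff
  obtain ⟨ψ, hψ⟩ := exists_lap_eq_dipole G₂ ((hreach a b).1 hab)
  have hker : φ - ψ ∈ LinearMap.ker (lap G₂) := (mem_ker_lap G₂).2 fun c d hcd => by
    rw [PiLp.sub_apply, PiLp.sub_apply]
    by_cases hac : G₁.Reachable a c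
    · have hbc := hab.symm.trans hac
      have h₁ := two_mul_sub_eq_effRes h hbc ((hreach c d).2 hcd)
      have h₂ := two_mul_sub_eq_effRes hψ ((hreach b c).1 hbc) hcd
      simp only [heff] at h₁
      linarith
    · rw [apply_eq_apply_of_not_reachable h hab hac ((hreach c d).2 hcd),
        apply_eq_apply_of_not_reachable hψ ((hreach a b).1 hab) (mt (hreach a c).2 hac) hcd]
  rw [LinearMap.mem_ker, map_sub, sub_eq_zero] at hker
  rw [hker, hψ]

theorem eq_of_effRes_eq (heff : ∀ u v, effRes G₁ u v = effRes G₂ u v) : G₁ = G₂ := by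
  have hreach := reachable_iff_of_effRes_eq heff
  have hker : LinearMap.ker (lap G₁) ≤ LinearMap.ker (lap G₂) := fun φ hφ =>
    (mem_ker_lap G₂).2 fun a b h => (mem_ker_lap G₁).1 hφ a b ((hreach a b).2 h)
  refine SimpleGraph.eq_of_lapMatrix_eq (R := ℝ) (Matrix.toEuclideanLin.injective ?_)
  refine LinearMap.eq_of_ker_le_of_range_le_span hker (range_lap G₁).le ?_
  rintro _ ⟨a, b, hab, rfl⟩
  obtain ⟨φ, hφ⟩ := exists_lap_eq_dipole G₁ hab
  exact ⟨φ, hφ, lap_eq_dipole_of_effRes_eq heff hab hφ⟩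

theorem effRes_eq_of_renRes_eq {u v : V} (h : renRes G₁ u v = renRes G₂ u v) :
    effRes G₁ u v = effRes G₂ u v := by
  have hlt : ∀ t : ℝ≥0∞, t.toReal / (t.toReal + 1) < 1 := fun t => by
    rw [div_lt_one (by positivity)]
    linarith
  unfold renRes at h
  split_ifs at h with h₁ h₂ h₂
  · rw [h₁, h₂]
  · exact absurd h.symm (hlt _).ne
  · exact absurd h (hlt _).ne
  · rw [div_eq_div_iff (by positivity) (by positivity)] at h
    exact (ENNReal.toReal_eq_toReal_iff' h₁ h₂).1 (by linarith)

theorem renRes_eq_of_RDon_eq_zero [LinearOrder V] {S : Finset V} (h : RDon S G₁ G₂ = 0) {u v : V}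
    (hu : u ∈ S) (hv : v ∈ S) (huv : u < v) : renRes G₁ u v = renRes G₂ u v := by
  have := (sum_eq_zero_iff_of_nonneg fun p _ => abs_nonneg _).1 h (u, v) (by simp [hu, hv, huv])
  exact sub_eq_zero.1 (abs_eq_zero.1 this)

theorem effRes_eq_of_RDon_eq_zero [LinearOrder V] {S : Finset V}
    (hS₁ : ∀ u v, G₁.Adj u v → u ∈ S) (hS₂ : ∀ u v, G₂.Adj u v → u ∈ S) (h0 : RDon S G₁ G₂ = 0)
    (u v : V) : effRes G₁ u v = effRes G₂ u v := by
  have houtside : ∀ u v, u ∉ S → u ≠ v → effRes G₁ u v = effRes G₂ u v := fun u v hu huv => by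
    rw [effRes_eq_top_of_forall_not_adj (fun w h => hu (hS₁ u w h)) huv,
      effRes_eq_top_of_forall_not_adj (fun w h => hu (hS₂ u w h)) huv]
  have hlt : ∀ u v, u < v → effRes G₁ u v = effRes G₂ u v := fun u v huv => by
    by_cases hu : u ∈ S
    · by_cases hv : v ∈ S
      · exact effRes_eq_of_renRes_eq (renRes_eq_of_RDon_eq_zero h0 hu hv huv)
      · rw [effRes_comm (G := G₁), effRes_comm (G := G₂)]
        exact houtside v u hv huv.ne'
    · exact houtside u v hu huv.ne
  rcases lt_trichotomy u v with huv | rfl | hvu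
  · exact hlt u v huv
  · rw [effRes_self, effRes_self]
  · rw [effRes_comm (G := G₁), effRes_comm (G := G₂)]
    exact hlt v u hvu

end TwoGraphs

/-- if two graphs, with respective vertex sets `V₁` and `V₂`, are at renormalized
resistance distance `0` when compared on the common vertex set `V₁ ∪ V₂`, then they have the
same edges, and they differ only by sets of isolated vertices. -/
theorem RD_eq_zero_implies_same_edges {W : Type*} [Fintype W] [LinearOrder W]
    (V₁ V₂ : Finset W) (G₁ G₂ : SimpleGraph W)
    (h₁ : ∀ u v, G₁.Adj u v → u ∈ V₁ ∧ v ∈ V₁)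
    (h₂ : ∀ u v, G₂.Adj u v → u ∈ V₂ ∧ v ∈ V₂)
    (h0 : RDon (V₁ ∪ V₂) G₁ G₂ = 0) :
    G₁ = G₂ ∧
    (∀ v ∈ V₁ \ V₂, ∀ u, ¬ G₁.Adj v u) ∧
    (∀ v ∈ V₂ \ V₁, ∀ u, ¬ G₂.Adj v u) := by
  obtain rfl := eq_of_effRes_eq (effRes_eq_of_RDon_eq_zero
    (fun u v h => mem_union_left _ (h₁ u v h).1) (fun u v h => mem_union_right _ (h₂ u v h).1) h0)
  exact ⟨rfl, fun v hv u h => (mem_sdiff.1 hv).2 (h₂ v u h).1,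
    fun v hv u h => (mem_sdiff.1 hv).2 (h₁ v u h).1⟩

end RP
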